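/- arXiv:2005.11378 — 2 statements merged into one kernel-verified Lean document; each statement's English description precedes it below -/
import Mathlib

section
/- For any θ ∈ (0,1], σ₃² - σ₁² = e^{-θ}(1-e^{-θ}) - 2θe^{-θ} + θ ≥ 0, with equality never attained; hence the PoT estimator variance σ₁² = -θ + θ²S is at most the block-maxima variance σ₃² = e^{-θ}(1-e^{-θ}) - 2θe^{-θ} + θ²S for any S ≥ 0. -/
theorem stmt2 (θ : ℝ) (hθ0 : 0 < θ) (hθ1 : θ ≤ 1) :
    0 < Real.exp (-θ) * (1 - Real.exp (-θ)) - 2 * θ * Real.exp (-θ) + θ ∧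
    ∀ S : ℝ, 0 ≤ S →
      -θ + θ ^ 2 * S ≤
        Real.exp (-θ) * (1 - Real.exp (-θ)) - 2 * θ * Real.exp (-θ) + θ ^ 2 * S := by
  have h1 : 1 - θ ≤ Real.exp (-θ) := by
    have := Real.add_one_le_exp (-θ); linarith
  have h2 : Real.exp (-θ) * (1 + θ) ≤ 1 := by
    have h := Real.add_one_le_exp θ
    have hp : 0 < Real.exp (-θ) := Real.exp_pos _
    have : Real.exp (-θ) * (θ + 1) ≤ Real.exp (-θ) * Real.exp θ :=
      mul_le_mul_of_nonneg_left h hp.le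
    rw [← Real.exp_add] at this
    simpa [add_comm] using this
  have key : 0 < Real.exp (-θ) * (1 - Real.exp (-θ)) - 2 * θ * Real.exp (-θ) + θ := by
    set t := Real.exp (-θ) - (1 - θ) with ht_def
    have ht0 : 0 ≤ t := by linarith
    have ht : t * (1 + θ) ≤ θ ^ 2 := by nlinarith
    have hexp : Real.exp (-θ) = 1 - θ + t := by ring
    rw [hexp]
    nlinarith [mul_nonneg ht0 hθ0.le, mul_nonneg ht0 ht0, sq_nonneg (t - θ),
      mul_nonneg (mul_nonneg ht0 ht0) hθ0.le, mul_pos hθ0 hθ0]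
  exact ⟨key, fun S hS => by linarith⟩
end

section
/- Let π(m) = P(Σ_{j∈ℤ} 1{|Y_j| > 1} = m | infargmax(Y) = 0) be the limiting cluster size distribution, and ϑ = P(infargmax(Y) = 0) > 0. If P(lim_{|j|→∞}|Y_j| = 0) = 1, then Σ_{m≥1} m·π(m) = ϑ^{-1} and Σ_{m≥1} m²·π(m) = ϑ^{-1} Σ_{j∈ℤ} P(|Y_j| > 1). -/
open MeasureTheory Filter

/-- `infargmax x = 0`. -/
def isAnchorZero {d : ℕ} (x : ℤ → EuclideanSpace ℝ (Fin d)) : Prop :=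
  (⨆ i : {i : ℤ // i ≤ 0}, ‖x i‖) = (⨆ i : ℤ, ‖x i‖) ∧
  ∀ j : ℤ, j < 0 → (⨆ i : {i : ℤ // i ≤ j}, ‖x i‖) ≠ (⨆ i : ℤ, ‖x i‖)

/-- The exceedance functional `E(x) = Σ_{j∈ℤ} 1{|x_j| > 1}`. -/
noncomputable def Exc {d : ℕ} (x : ℤ → EuclideanSpace ℝ (Fin d)) : ℝ :=
  ∑' j : ℤ, if 1 < ‖x j‖ then (1 : ℝ) else 0

/-
Let `A` be the event `infargmax = 0` and `N(x) = #{j | |x_j| > 1}`. A path with finitely many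
exceedances and `|x_0| > 1` has exactly one shift `x(· + j)` that is anchored at `0`, and that
`j` is itself an exceedance. Hence for every shift-invariant `H ≥ 0`, summing the time change
formula over `j` gives
  `E[1_A(Y) N(Y) H(Y)] = Σ_j E[1{|Y_j| > 1} 1_A(Y) H(Y)] = Σ_j E[1_A(Y(· + j)) H(Y)] = E[H(Y)]`.
With `H = 1` and `H = N` this is `E[1_A N] = 1` and `E[1_A N²] = Σ_j P(|Y_j| > 1)`, and the
moments of `π` are these divided by `ϑ`. In the form of the time change used here, testing it
against `1{|x_{-j}| ≤ 1}` shows `{|Y_j| > 1} = {|Y_{-j}| > 1}` a.s., so both sides of it may be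
restricted to the same event.
-/

open Set
open scoped ENNReal

instance (j : ℤ) : Nonempty {i : ℤ // i ≤ j} := ⟨⟨j, le_rfl⟩⟩

noncomputable def runningSup (a : ℤ → ℝ) (j : ℤ) : ℝ := ⨆ i : {i : ℤ // i ≤ j}, a i

lemma runningSup_comp_add_right (a : ℤ → ℝ) (j l : ℤ) :
    (⨆ i : {i : ℤ // i ≤ l}, a (i + j)) = runningSup a (l + j) :=
  Equiv.iSup_comp (g := fun i : {i : ℤ // i ≤ l + j} => a i)
    (Equiv.subtypeEquiv (Equiv.addRight j) fun _ => (add_le_add_iff_right j).symm)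

section RunningSup

variable {a : ℤ → ℝ}

lemma bddAbove_range_of_finite (hfin : {i | 1 < a i}.Finite) : BddAbove (range a) := by
  refine ((bddAbove_Iic (a := 1)).union (hfin.image a).bddAbove).mono ?_
  rintro _ ⟨i, rfl⟩
  by_cases hi : 1 < a i
  · exact Or.inr ⟨i, hi, rfl⟩
  · exact Or.inl (not_lt.mp hi)

lemma le_runningSup (hfin : {i | 1 < a i}.Finite) {i j : ℤ} (h : i ≤ j) :
    a i ≤ runningSup a j :=
  le_ciSup ((bddAbove_range_of_finite hfin).mono (range_comp_subset_range Subtype.val a))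
    (⟨i, h⟩ : {i : ℤ // i ≤ j})

lemma runningSup_le_iSup (hfin : {i | 1 < a i}.Finite) (j : ℤ) : runningSup a j ≤ ⨆ i, a i :=
  ciSup_le fun i => le_ciSup (bddAbove_range_of_finite hfin) i.1

lemma runningSup_le_max_runningSup_sub_one (hfin : {i | 1 < a i}.Finite) (j : ℤ) :
    runningSup a j ≤ max (runningSup a (j - 1)) (a j) := by
  refine ciSup_le fun i => ?_
  rcases i.2.lt_or_eq with hlt | heq
  · exact le_max_of_le_left (le_runningSup hfin (by omega))
  · rw [heq]; exact le_max_right _ _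

lemma one_lt_iSup (hfin : {i | 1 < a i}.Finite) (h0 : 1 < a 0) : 1 < ⨆ i, a i :=
  h0.trans_le (le_ciSup (bddAbove_range_of_finite hfin) 0)

lemma exists_isLeast_runningSup_eq_iSup (hfin : {i | 1 < a i}.Finite) (h0 : 1 < a 0) :
    ∃ j, IsLeast {k | runningSup a k = ⨆ i, a i} j := by
  obtain ⟨z, hz⟩ := (hfin.insert 0).bddAbove
  obtain ⟨b, hb⟩ := (hfin.insert 0).bddBelow
  have hinh : ∃ k, runningSup a k = ⨆ i, a i := by
    refine ⟨z, (runningSup_le_iSup hfin z).antisymm (ciSup_le fun i => ?_)⟩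
    by_cases hi : i ≤ z
    · exact le_runningSup hfin hi
    · have : ¬ 1 < a i := fun h => hi (hz (mem_insert_of_mem _ h))
      exact (not_lt.mp this).trans (h0.le.trans (le_runningSup hfin (hz (mem_insert _ _))))
  have hbdd : ∃ b, ∀ k, runningSup a k = ⨆ i, a i → b ≤ k := by
    refine ⟨b, fun k hk => not_lt.mp fun hkb => (one_lt_iSup hfin h0).not_ge ?_⟩
    rw [← hk]
    exact ciSup_le fun i => not_lt.mp fun h => by
      have := hb (mem_insert_of_mem _ h); have := i.2; omega
  obtain ⟨j, hj, hjl⟩ := Int.exists_least_of_bdd hbdd hinh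
  exact ⟨j, hj, hjl⟩

lemma one_lt_of_isLeast_runningSup_eq_iSup (hfin : {i | 1 < a i}.Finite) (h0 : 1 < a 0) {j : ℤ}
    (hj : IsLeast {k | runningSup a k = ⨆ i, a i} j) : 1 < a j := by
  by_contra hle
  have hprev : runningSup a (j - 1) = ⨆ i, a i := by
    refine (runningSup_le_iSup hfin _).antisymm ?_
    have := hj.1 ▸ runningSup_le_max_runningSup_sub_one hfin j
    exact (le_max_iff.mp this).resolve_right fun h =>
      hle ((one_lt_iSup hfin h0).trans_le h)
  have := hj.2 hprev
  omega

end RunningSup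

section Anchor

variable {d : ℕ}

lemma isAnchorZero_comp_add_right_iff (x : ℤ → EuclideanSpace ℝ (Fin d)) (j : ℤ) :
    isAnchorZero (fun i => x (i + j)) ↔
      IsLeast {k | runningSup (‖x ·‖) k = ⨆ i, ‖x i‖} j := by
  have htot : (⨆ i, ‖x (i + j)‖) = ⨆ i, ‖x i‖ :=
    (Equiv.addRight j).iSup_comp (g := fun i => ‖x i‖)
  simp only [isAnchorZero, htot, runningSup_comp_add_right (‖x ·‖), zero_add, IsLeast,
    lowerBounds]
  refine and_congr_right fun _ => ⟨fun h k hk => ?_, fun h k hk hk' => ?_⟩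
  · by_contra hlt
    exact h (k - j) (by omega) (by rwa [sub_add_cancel])
  · have := h hk'
    omega

lemma existsUnique_isAnchorZero_comp_add_right {x : ℤ → EuclideanSpace ℝ (Fin d)}
    (hfin : {i | 1 < ‖x i‖}.Finite) (h0 : 1 < ‖x 0‖) :
    ∃! j, isAnchorZero (fun i => x (i + j)) := by
  simp only [isAnchorZero_comp_add_right_iff]
  obtain ⟨j, hj⟩ := exists_isLeast_runningSup_eq_iSup hfin h0
  exact ⟨j, hj, fun k hk => hk.unique hj⟩

lemma one_lt_norm_of_isAnchorZero_comp_add_right {x : ℤ → EuclideanSpace ℝ (Fin d)}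
    (hfin : {i | 1 < ‖x i‖}.Finite) (h0 : 1 < ‖x 0‖) {j : ℤ}
    (hj : isAnchorZero (fun i => x (i + j))) : 1 < ‖x j‖ :=
  one_lt_of_isLeast_runningSup_eq_iSup hfin h0 ((isAnchorZero_comp_add_right_iff x j).mp hj)

lemma measurableSet_isAnchorZero :
    MeasurableSet {x : ℤ → EuclideanSpace ℝ (Fin d) | isAnchorZero x} := by
  have hsup : ∀ j : ℤ, Measurable fun x : ℤ → EuclideanSpace ℝ (Fin d) =>
      ⨆ i : {i : ℤ // i ≤ j}, ‖x i‖ :=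
    fun j => Measurable.iSup fun i => (measurable_pi_apply (i : ℤ)).norm
  have htot : Measurable fun x : ℤ → EuclideanSpace ℝ (Fin d) => ⨆ i : ℤ, ‖x i‖ :=
    Measurable.iSup fun i => (measurable_pi_apply i).norm
  exact measurableSet_setOfPred.2 <| (measurableSet_eq_fun (hsup 0) htot).mem.and <|
    Measurable.forall fun j => measurable_const.imp (measurableSet_eq_fun (hsup j) htot).mem.not

end Anchor

section Measure

variable {Ω X : Type*} [MeasurableSpace Ω] [MeasurableSpace X] {μ : Measure Ω}

lemma map_restrict_eq_of_forall_integral_eq [IsFiniteMeasure μ] {f g : Ω → X}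
    (hf : Measurable f) (hg : Measurable g) {s t : Set Ω} (hs : MeasurableSet s)
    (ht : MeasurableSet t)
    (h : ∀ G : X → ℝ, Measurable G → (∃ C, ∀ x, |G x| ≤ C) →
      ∫ ω, G (f ω) * s.indicator (fun _ => (1 : ℝ)) ω ∂μ =
        ∫ ω, G (g ω) * t.indicator (fun _ => (1 : ℝ)) ω ∂μ) :
    (μ.restrict s).map f = (μ.restrict t).map g := by
  ext B hB
  have hind : ∀ (φ : Ω → X) (u : Set Ω), (fun ω => B.indicator 1 (φ ω) *
      u.indicator (fun _ => (1 : ℝ)) ω) = (φ ⁻¹' B ∩ u).indicator 1 := by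
    intro φ u
    ext ω
    by_cases hB : φ ω ∈ B <;> by_cases hu : ω ∈ u <;> simp [hB, hu]
  have key := h (B.indicator 1) (measurable_one.indicator hB)
    ⟨1, fun x => by by_cases hx : x ∈ B <;> simp [hx]⟩
  rw [hind, hind, integral_indicator_one ((hf hB).inter hs),
    integral_indicator_one ((hg hB).inter ht), measureReal_eq_measureReal_iff] at key
  rwa [Measure.map_apply hf hB, Measure.map_apply hg hB, Measure.restrict_apply (hf hB),
    Measure.restrict_apply (hg hB)]

lemma tsum_setLIntegral_eq_lintegral_tsum_indicator_mul {ι : Type*} [Countable ι]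
    {S : ι → Set Ω} (hS : ∀ i, MeasurableSet (S i)) {g : Ω → ℝ≥0∞} (hg : Measurable g) :
    ∑' i, ∫⁻ ω in S i, g ω ∂μ = ∫⁻ ω, (∑' i, (S i).indicator 1 ω) * g ω ∂μ := by
  calc ∑' i, ∫⁻ ω in S i, g ω ∂μ = ∑' i, ∫⁻ ω, (S i).indicator g ω ∂μ :=
        tsum_congr fun i => (lintegral_indicator (hS i) g).symm
    _ = ∫⁻ ω, ∑' i, (S i).indicator g ω ∂μ :=
        (lintegral_tsum fun i => (hg.indicator (hS i)).aemeasurable).symm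
    _ = _ := by
        refine lintegral_congr fun ω => ?_
        rw [← ENNReal.tsum_mul_right]
        refine tsum_congr fun i => ?_
        by_cases h : ω ∈ S i <;> simp [h]

lemma tsum_setLIntegral_of_ae_existsUnique {ι : Type*} [Countable ι] {T : ι → Set Ω}
    (hT : ∀ i, MeasurableSet (T i)) (h : ∀ᵐ ω ∂μ, ∃! i, ω ∈ T i) (f : Ω → ℝ≥0∞) :
    ∑' i, ∫⁻ ω in T i, f ω ∂μ = ∫⁻ ω, f ω ∂μ := by
  have hdisj : Pairwise fun i j => AEDisjoint μ (T i) (T j) := fun i j hij => by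
    refine measure_eq_zero_iff_ae_notMem.2 ?_
    filter_upwards [h] with ω ⟨k, _, hk⟩ ⟨hi, hj⟩
    exact hij ((hk i hi).trans (hk j hj).symm)
  rw [← lintegral_iUnion₀ (fun i => (hT i).nullMeasurableSet) hdisj,
    Measure.restrict_eq_self_of_ae_mem]
  filter_upwards [h] with ω ⟨i, hi, _⟩
  exact mem_iUnion.2 ⟨i, hi⟩

lemma tsum_mul_measure_inter_preimage_natCast {f : Ω → ℝ} (hf : Measurable f)
    (hnat : ∀ᵐ ω ∂μ, f ω ∈ range ((↑) : ℕ → ℝ)) {s : Set Ω} {F : ℝ → ℝ≥0∞}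
    (hF : Measurable F) :
    ∑' m : ℕ, F m * μ (s ∩ f ⁻¹' {(m : ℝ)}) = ∫⁻ ω in s, F (f ω) ∂μ := by
  have hν : ∀ᵐ x ∂(μ.restrict s).map f, x ∈ range ((↑) : ℕ → ℝ) :=
    (ae_map_iff hf.aemeasurable (countable_range _).measurableSet).2 (ae_restrict_of_ae hnat)
  rw [← lintegral_map hF hf, ← Measure.restrict_eq_self_of_ae_mem hν,
    lintegral_countable _ (countable_range _),
    tsum_range (fun x => F x * (μ.restrict s).map f {x}) Nat.cast_injective]
  refine tsum_congr fun m => ?_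
  rw [Measure.map_apply hf (measurableSet_singleton _),
    Measure.restrict_apply (hf (measurableSet_singleton _)), inter_comm]

end Measure

section Exceedances

variable {d : ℕ}

-- Unlike `Exc`, which is `0` when there are infinitely many exceedances, this count is then `∞`.
noncomputable def exceedanceCount (x : ℤ → EuclideanSpace ℝ (Fin d)) : ℝ≥0∞ :=
  ∑' j : ℤ, if 1 < ‖x j‖ then 1 else 0

lemma measurable_exceedanceCount : Measurable (exceedanceCount (d := d)) :=
  Measurable.tsum fun j =>
    Measurable.ite (measurableSet_lt measurable_const (measurable_pi_apply j).norm)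
      measurable_const measurable_const

lemma exceedanceCount_comp_add_right (x : ℤ → EuclideanSpace ℝ (Fin d)) (j : ℤ) :
    exceedanceCount (fun i => x (i + j)) = exceedanceCount x :=
  (Equiv.addRight j).tsum_eq fun i => if 1 < ‖x i‖ then (1 : ℝ≥0∞) else 0

lemma measurable_Exc : Measurable (Exc (d := d)) :=
  Measurable.tsum fun j =>
    Measurable.ite (measurableSet_lt measurable_const (measurable_pi_apply j).norm)
      measurable_const measurable_const

lemma exceedanceCount_eq_tsum_indicator {Ω : Type*} (Y : Ω → ℤ → EuclideanSpace ℝ (Fin d))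
    (ω : Ω) : exceedanceCount (Y ω) = ∑' j, {ω | 1 < ‖Y ω j‖}.indicator 1 ω :=
  tsum_congr fun j => by by_cases h : 1 < ‖Y ω j‖ <;> simp [h]

variable {x : ℤ → EuclideanSpace ℝ (Fin d)}

lemma finite_exceedances_of_tendsto (hx : Tendsto (fun j => ‖x j‖) (cocompact ℤ) (nhds 0)) :
    {j | 1 < ‖x j‖}.Finite := by
  have h : ∀ᶠ j in cofinite, ‖x j‖ < 1 := by
    rw [← cocompact_eq_cofinite ℤ]
    exact hx.eventually_lt_const one_pos
  exact (eventually_cofinite.mp h).subset fun j hj => not_lt.mpr hj.le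

lemma ofReal_Exc (hfin : {j | 1 < ‖x j‖}.Finite) :
    ENNReal.ofReal (Exc x) = exceedanceCount x := by
  rw [Exc, ENNReal.ofReal_tsum_of_nonneg (fun j => by positivity)
    (summable_of_hasFiniteSupport (hfin.subset fun j hj => by simpa using hj))]
  exact tsum_congr fun j => by split_ifs <;> simp

lemma Exc_mem_range_natCast (hfin : {j | 1 < ‖x j‖}.Finite) :
    Exc x ∈ range ((↑) : ℕ → ℝ) := by
  classical
  refine ⟨(hfin.toFinset.filter fun j => 1 < ‖x j‖).card, ?_⟩
  rw [Exc, tsum_eq_sum (s := hfin.toFinset) fun j hj => by simpa using hj, Finset.sum_boole]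

end Exceedances

section TailProcess

variable {Ω : Type*} [MeasurableSpace Ω] {μ : Measure Ω} {d : ℕ}
  {Y : Ω → ℤ → EuclideanSpace ℝ (Fin d)}

lemma measurable_comp_add_right (hY : Measurable Y) (j : ℤ) :
    Measurable fun ω i => Y ω (i + j) :=
  measurable_pi_lambda _ fun _ => hY.eval

lemma measurableSet_exceedance (hY : Measurable Y) (j : ℤ) :
    MeasurableSet {ω | 1 < ‖Y ω j‖} :=
  measurableSet_lt measurable_const hY.eval.norm

lemma measure_exceedance_diff_eq_zero (hY : Measurable Y) (h0 : ∀ᵐ ω ∂μ, 1 < ‖Y ω 0‖) {j : ℤ}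
    (hmap : (μ.restrict {ω | 1 < ‖Y ω j‖}).map Y =
      (μ.restrict {ω | 1 < ‖Y ω (-j)‖}).map fun ω i => Y ω (i + j)) :
    μ ({ω | 1 < ‖Y ω j‖} \ {ω | 1 < ‖Y ω (-j)‖}) = 0 := by
  have hB : MeasurableSet {x : ℤ → EuclideanSpace ℝ (Fin d) | ¬ 1 < ‖x (-j)‖} :=
    (measurableSet_lt measurable_const (measurable_pi_apply _).norm).compl
  have h := congrArg (· {x | ¬ 1 < ‖x (-j)‖}) hmap
  simp only [Measure.map_apply hY hB, Measure.map_apply (measurable_comp_add_right hY j) hB,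
    Measure.restrict_apply (hY hB),
    Measure.restrict_apply (measurable_comp_add_right hY j hB)] at h
  rw [sdiff_eq, inter_comm]
  refine h.trans (measure_mono_null (fun ω hω => ?_) (ae_iff.1 h0))
  simpa using hω.1

lemma exceedance_ae_eq_exceedance_neg (hY : Measurable Y) (h0 : ∀ᵐ ω ∂μ, 1 < ‖Y ω 0‖)
    (hmap : ∀ j, (μ.restrict {ω | 1 < ‖Y ω j‖}).map Y =
      (μ.restrict {ω | 1 < ‖Y ω (-j)‖}).map fun ω i => Y ω (i + j)) (j : ℤ) :
    {ω | 1 < ‖Y ω j‖} =ᵐ[μ] {ω | 1 < ‖Y ω (-j)‖} := by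
  refine ae_eq_set.2 ⟨measure_exceedance_diff_eq_zero hY h0 (hmap j), ?_⟩
  simpa using measure_exceedance_diff_eq_zero hY h0 (hmap (-j))

theorem setLIntegral_isAnchorZero_exceedanceCount_mul (hY : Measurable Y)
    (hmap : ∀ j, (μ.restrict {ω | 1 < ‖Y ω j‖}).map Y =
      (μ.restrict {ω | 1 < ‖Y ω j‖}).map fun ω i => Y ω (i + j))
    (hpath : ∀ᵐ ω ∂μ, {i | 1 < ‖Y ω i‖}.Finite ∧ 1 < ‖Y ω 0‖)
    {H : (ℤ → EuclideanSpace ℝ (Fin d)) → ℝ≥0∞} (hH : Measurable H)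
    (hH_shift : ∀ x j, H (fun i => x (i + j)) = H x) :
    ∫⁻ ω in {ω | isAnchorZero (Y ω)}, exceedanceCount (Y ω) * H (Y ω) ∂μ =
      ∫⁻ ω, H (Y ω) ∂μ := by
  set A := {x : ℤ → EuclideanSpace ℝ (Fin d) | isAnchorZero x}
  set T : ℤ → Set Ω := fun j => {ω | isAnchorZero fun i => Y ω (i + j)}
  have hA : MeasurableSet A := measurableSet_isAnchorZero
  have hT : ∀ j, MeasurableSet (T j) := fun j => measurable_comp_add_right hY j hA
  have hAH : Measurable (A.indicator H) := hH.indicator hA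
  have hunique : ∀ᵐ ω ∂μ, ∃! j, ω ∈ T j := hpath.mono fun ω hω =>
    existsUnique_isAnchorZero_comp_add_right hω.1 hω.2
  have hTS : ∀ j, ∀ᵐ ω ∂μ, ω ∈ T j → ω ∈ {ω | 1 < ‖Y ω j‖} := fun j => hpath.mono
    fun ω hω => one_lt_norm_of_isAnchorZero_comp_add_right hω.1 hω.2
  have hstep : ∀ j, ∫⁻ ω in {ω | 1 < ‖Y ω j‖}, A.indicator H (Y ω) ∂μ =
      ∫⁻ ω in T j, H (Y ω) ∂μ := fun j => by
    calc ∫⁻ ω in {ω | 1 < ‖Y ω j‖}, A.indicator H (Y ω) ∂μ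
        = ∫⁻ ω in {ω | 1 < ‖Y ω j‖}, A.indicator H (fun i => Y ω (i + j)) ∂μ := by
          rw [← lintegral_map hAH hY, hmap j,
            lintegral_map hAH (measurable_comp_add_right hY j)]
      _ = ∫⁻ ω in {ω | 1 < ‖Y ω j‖}, (T j).indicator (fun ω => H (Y ω)) ω ∂μ := by
          refine lintegral_congr fun ω => ?_
          by_cases h : ω ∈ T j
          · rw [indicator_of_mem h, indicator_of_mem (show _ ∈ A from h), hH_shift]
          · rw [indicator_of_notMem h, indicator_of_notMem (show _ ∉ A from h)]
      _ = ∫⁻ ω in T j, H (Y ω) ∂μ := by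
          rw [lintegral_indicator (hT j), Measure.restrict_restrict (hT j),
            Measure.restrict_congr_set (inter_eventuallyEq_left.2 (hTS j))]
  calc ∫⁻ ω in {ω | isAnchorZero (Y ω)}, exceedanceCount (Y ω) * H (Y ω) ∂μ
      = ∫⁻ ω, (∑' j, {ω | 1 < ‖Y ω j‖}.indicator 1 ω) * A.indicator H (Y ω) ∂μ := by
        rw [← lintegral_indicator (show MeasurableSet {ω | isAnchorZero (Y ω)} from hY hA)]
        refine lintegral_congr fun ω => ?_
        rw [← exceedanceCount_eq_tsum_indicator]
        by_cases h : Y ω ∈ A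
        · rw [indicator_of_mem (s := {ω | isAnchorZero (Y ω)}) h, indicator_of_mem h]
        · rw [indicator_of_notMem (s := {ω | isAnchorZero (Y ω)}) h, indicator_of_notMem h,
            mul_zero]
    _ = ∑' j, ∫⁻ ω in {ω | 1 < ‖Y ω j‖}, A.indicator H (Y ω) ∂μ :=
        (tsum_setLIntegral_eq_lintegral_tsum_indicator_mul (measurableSet_exceedance hY)
          (hAH.comp hY)).symm
    _ = ∫⁻ ω, H (Y ω) ∂μ := by
        rw [tsum_congr hstep, tsum_setLIntegral_of_ae_existsUnique hT hunique]

lemma tsum_pow_mul_measure_inter_Exc_eq (hY : Measurable Y)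
    (hfin : ∀ᵐ ω ∂μ, {i | 1 < ‖Y ω i‖}.Finite) (s : Set Ω) (k : ℕ) :
    ∑' m : ℕ, (m : ℝ≥0∞) ^ k * μ (s ∩ {ω | Exc (Y ω) = (m : ℝ)}) =
      ∫⁻ ω in s, exceedanceCount (Y ω) ^ k ∂μ := by
  have hlevel := tsum_mul_measure_inter_preimage_natCast (μ := μ) (s := s)
    (f := fun ω => Exc (Y ω)) (measurable_Exc.comp hY)
    (hfin.mono fun ω hω => Exc_mem_range_natCast hω) (ENNReal.measurable_ofReal.pow_const k)
  simp only [ENNReal.ofReal_natCast] at hlevel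
  refine hlevel.trans (lintegral_congr_ae (ae_restrict_of_ae (hfin.mono fun ω hω =>
    congrArg (· ^ k) (ofReal_Exc hω))))

lemma lintegral_exceedanceCount (hY : Measurable Y) :
    ∫⁻ ω, exceedanceCount (Y ω) ∂μ = ∑' j, μ {ω | 1 < ‖Y ω j‖} := by
  simpa [exceedanceCount_eq_tsum_indicator] using
    (tsum_setLIntegral_eq_lintegral_tsum_indicator_mul (μ := μ)
      (measurableSet_exceedance hY) measurable_const (g := 1)).symm

end TailProcess

theorem stmt10_general {Ω : Type*} [MeasurableSpace Ω] (μ : Measure Ω) [IsProbabilityMeasure μ]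
    {d : ℕ} (Y : Ω → ℤ → EuclideanSpace ℝ (Fin d)) (hYmeas : Measurable Y)
    (hY0gt1 : ∀ᵐ ω ∂μ, 1 < ‖Y ω 0‖)
    (hY0 : ∀ᵐ ω ∂μ, Tendsto (fun j : ℤ => ‖Y ω j‖) (cocompact ℤ) (nhds 0))
    (htc : ∀ G : (ℤ → EuclideanSpace ℝ (Fin d)) → ℝ, Measurable G →
      (∃ C, ∀ x, |G x| ≤ C) → ∀ j : ℤ,
      ∫ ω, G (Y ω) * Set.indicator {ω | 1 < ‖Y ω j‖} (fun _ => (1 : ℝ)) ω ∂μ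
        = ∫ ω, G (fun i => Y ω (i + j)) *
            Set.indicator {ω | 1 < ‖Y ω (-j)‖} (fun _ => (1 : ℝ)) ω ∂μ)
    (ϑ : ℝ)
    (π : ℕ → ℝ)
    (hπ : ∀ m : ℕ, π m =
      (μ ({ω | isAnchorZero (Y ω)} ∩ {ω | Exc (Y ω) = (m : ℝ)})).toReal / ϑ) :
    (∑' m : ℕ, (m : ℝ) * π m) = ϑ⁻¹ ∧
    (∑' m : ℕ, (m : ℝ) ^ 2 * π m) = ϑ⁻¹ * ∑' j : ℤ, (μ {ω | 1 < ‖Y ω j‖}).toReal := by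
  have hpath : ∀ᵐ ω ∂μ, {i | 1 < ‖Y ω i‖}.Finite ∧ 1 < ‖Y ω 0‖ := by
    filter_upwards [hY0, hY0gt1] with ω h h0 using ⟨finite_exceedances_of_tendsto h, h0⟩
  have hmap : ∀ j, (μ.restrict {ω | 1 < ‖Y ω j‖}).map Y =
      (μ.restrict {ω | 1 < ‖Y ω j‖}).map fun ω i => Y ω (i + j) := by
    have hmap_neg := fun j => map_restrict_eq_of_forall_integral_eq hYmeas
      (measurable_comp_add_right hYmeas j) (measurableSet_exceedance hYmeas j)
      (measurableSet_exceedance hYmeas (-j)) fun G hG hC => htc G hG hC j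
    intro j
    rw [hmap_neg j,
      Measure.restrict_congr_set (exceedance_ae_eq_exceedance_neg hYmeas hY0gt1 hmap_neg j)]
  have hmoment : ∀ k : ℕ, ∑' m : ℕ, (m : ℝ) ^ k * π m =
      (∫⁻ ω in {ω | isAnchorZero (Y ω)}, exceedanceCount (Y ω) ^ k ∂μ).toReal / ϑ := by
    intro k
    rw [← tsum_pow_mul_measure_inter_Exc_eq hYmeas (hpath.mono fun _ h => h.1),
      ENNReal.tsum_toReal_eq fun m => by finiteness, ← tsum_div_const]
    refine tsum_congr fun m => ?_
    rw [hπ, ENNReal.toReal_mul, ENNReal.toReal_pow, ENNReal.toReal_natCast, mul_div_assoc]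
  have hfirst : ∫⁻ ω in {ω | isAnchorZero (Y ω)}, exceedanceCount (Y ω) ∂μ = 1 := by
    simpa using setLIntegral_isAnchorZero_exceedanceCount_mul hYmeas hmap hpath
      measurable_const (H := fun _ => 1) fun _ _ => rfl
  have hsecond := setLIntegral_isAnchorZero_exceedanceCount_mul hYmeas hmap hpath
    measurable_exceedanceCount exceedanceCount_comp_add_right
  constructor
  · simpa [hfirst] using hmoment 1
  · simp_rw [hmoment 2, pow_two]
    rw [hsecond, lintegral_exceedanceCount hYmeas, ENNReal.tsum_toReal_eq fun j => by finiteness,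
      div_eq_inv_mul]

theorem stmt10 {Ω : Type*} [MeasurableSpace Ω] (μ : Measure Ω) [IsProbabilityMeasure μ]
    {d : ℕ} (Y : Ω → ℤ → EuclideanSpace ℝ (Fin d)) (hYmeas : Measurable Y)
    (hY0gt1 : ∀ᵐ ω ∂μ, 1 < ‖Y ω 0‖)
    (hY0 : ∀ᵐ ω ∂μ, Tendsto (fun j : ℤ => ‖Y ω j‖) (cocompact ℤ) (nhds 0))
    (htc : ∀ G : (ℤ → EuclideanSpace ℝ (Fin d)) → ℝ, Measurable G →
      (∃ C, ∀ x, |G x| ≤ C) → ∀ j : ℤ,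
      ∫ ω, G (Y ω) * Set.indicator {ω | 1 < ‖Y ω j‖} (fun _ => (1 : ℝ)) ω ∂μ
        = ∫ ω, G (fun i => Y ω (i + j)) *
            Set.indicator {ω | 1 < ‖Y ω (-j)‖} (fun _ => (1 : ℝ)) ω ∂μ)
    (ϑ : ℝ) (hϑdef : ϑ = (μ {ω | isAnchorZero (Y ω)}).toReal) (hϑpos : 0 < ϑ)
    (π : ℕ → ℝ)
    (hπ : ∀ m : ℕ, π m =
      (μ ({ω | isAnchorZero (Y ω)} ∩ {ω | Exc (Y ω) = (m : ℝ)})).toReal / ϑ) :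
    (∑' m : ℕ, (m : ℝ) * π m) = ϑ⁻¹ ∧
    (∑' m : ℕ, (m : ℝ) ^ 2 * π m) = ϑ⁻¹ * ∑' j : ℤ, (μ {ω | 1 < ‖Y ω j‖}).toReal :=
  stmt10_general μ Y hYmeas hY0gt1 hY0 htc ϑ π hπ
end
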